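/- Let H, K be Hopf algebras with bijective antipodes, C a (K,H)-bi-Galois co-object, D an (H,H)-bimodule coalgebra, and σ̄ : C → C̄ the canonical coalgebra map. For V ∈ _H YD^D(H,H), the left K-module C ⊗_H V equipped with the coaction ρ(c ⊗_H v) = (c_{(2)} ⊗_H v_{[0]}) ⊗ (c_{(3)} ⊗_H v_{[1]} ⊗_H σ̄(c_{(1)})) satisfies the Yetter-Drinfeld compatibility condition over the datum (K, K, K, C ⊗_H D ⊗_H C̄): for all x ∈ K, ρ(x ▷ (c ⊗_H v)) = (x_{(2)} ▷ (c ⊗_H v))_{[0]} ⊗ x_{(3)} ▷ (x_{(2)} ▷ (c ⊗_H v))_{[1]} ◁ S_K⁻¹(x_{(1)}), i.e. C ⊗_H V is a generalized YD module over K. -/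

import Mathlib

open TensorProduct Coalgebra

variable {k : Type} [CommRing k]

/-- The right-hand side of the Yetter-Drinfeld compatibility condition (in the form
`ρ(hm) = h₍₂₎m₍₀₎ ⊗ h₍₃₎ ▷ m₍₁₎ ◁ S⁻¹(h₍₁₎)`) over the datum `(H,H,H,C)`, as a
`k`-linear map `H ⊗ M → M ⊗ C`. -/
noncomputable def ydRHS {H : Type} [Ring H] [Bialgebra k H]
    {M C : Type} [AddCommGroup M] [Module k M] [AddCommGroup C] [Module k C]
    (μ : H ⊗[k] M →ₗ[k] M) (aL : H ⊗[k] C →ₗ[k] C) (aR : C ⊗[k] H →ₗ[k] C)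
    (Sinv : H →ₗ[k] H) (ρ : M →ₗ[k] M ⊗[k] C) :
    H ⊗[k] M →ₗ[k] M ⊗[k] C :=
  (TensorProduct.map μ aL) ∘ₗ
    (TensorProduct.assoc k (H ⊗[k] M) H C).toLinearMap ∘ₗ
    (TensorProduct.map
      ((TensorProduct.assoc k H M H).symm.toLinearMap ∘ₗ
        (LinearMap.lTensor H (TensorProduct.comm k H M).toLinearMap) ∘ₗ
        (TensorProduct.assoc k H H M).toLinearMap)
      (aR ∘ₗ (TensorProduct.comm k H C).toLinearMap ∘ₗ (LinearMap.rTensor C Sinv))) ∘ₗ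
    (TensorProduct.tensorTensorTensorComm k (H ⊗[k] H) H M C).toLinearMap ∘ₗ
    (LinearMap.rTensor (M ⊗[k] C) (TensorProduct.comm k H (H ⊗[k] H)).toLinearMap) ∘ₗ
    (TensorProduct.map
      ((LinearMap.lTensor H (comul (R := k) (A := H))) ∘ₗ comul (R := k) (A := H)) ρ)

/-- The lifted coaction `ρ(c ⊗ v) = (c₍₂₎ ⊗ v₍₀₎) ⊗ (c₍₃₎ ⊗ (v₍₁₎ ⊗ σ̄(c₍₁₎)))` on
`C ⊗ V` with values in `(C ⊗ V) ⊗ (C ⊗ (D ⊗ C))`, at the level of `k`-modules. -/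
noncomputable def liftedCoaction {C D V : Type}
    [AddCommGroup C] [Module k C] [Coalgebra k C]
    [AddCommGroup D] [Module k D] [AddCommGroup V] [Module k V]
    (sigma : C →ₗ[k] C) (ρV : V →ₗ[k] V ⊗[k] D) :
    C ⊗[k] V →ₗ[k] (C ⊗[k] V) ⊗[k] (C ⊗[k] (D ⊗[k] C)) :=
  (TensorProduct.assoc k (C ⊗[k] V) C (D ⊗[k] C)).toLinearMap ∘ₗ
    (TensorProduct.map
      ((TensorProduct.assoc k C V C).symm.toLinearMap ∘ₗ
        (LinearMap.lTensor C (TensorProduct.comm k C V).toLinearMap) ∘ₗ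
        (TensorProduct.assoc k C C V).toLinearMap)
      (TensorProduct.comm k C D).toLinearMap) ∘ₗ
    (TensorProduct.tensorTensorTensorComm k (C ⊗[k] C) C V D).toLinearMap ∘ₗ
    (TensorProduct.map
      ((TensorProduct.comm k C (C ⊗[k] C)).toLinearMap ∘ₗ
        (LinearMap.rTensor (C ⊗[k] C) sigma) ∘ₗ
        (LinearMap.lTensor C (comul (R := k) (A := C))) ∘ₗ comul (R := k) (A := C))
      ρV)

lemma aux_antipode_one {H : Type} [Ring H] [HopfAlgebra k H] :
    HopfAlgebra.antipode (R := k) (A := H) (1 : H) = 1 := by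
  have := HopfAlgebra.mul_antipode_rTensor_comul_apply (R := k) (A := H) 1
  simpa [Algebra.TensorProduct.one_def] using this

set_option maxRecDepth 8000 in
/-- Evaluation of `liftedCoaction` on a pure tensor, in terms of chosen
representations of the iterated comultiplication and the coaction. -/
lemma liftedCoaction_apply_repr {C D V : Type}
    [AddCommGroup C] [Module k C] [Coalgebra k C]
    [AddCommGroup D] [Module k D] [AddCommGroup V] [Module k V]
    (sigma : C →ₗ[k] C) (ρV : V →ₗ[k] V ⊗[k] D)
    {ι : Type*} {ι' : ι → Type*} {ιv : Type*}
    (t : Finset ι) (u : ∀ p, Finset (ι' p)) (w : Finset ιv)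
    (f g : ι → C) (f2 g2 : ∀ p, ι' p → C) (v0 : ιv → V) (v1 : ιv → D)
    (c : C) (v : V)
    (hΔa : comul (R := k) c = ∑ p ∈ t, f p ⊗ₜ g p)
    (hΔg : ∀ p, comul (R := k) (g p) = ∑ q ∈ u p, f2 p q ⊗ₜ g2 p q)
    (hρ : ρV v = ∑ s ∈ w, v0 s ⊗ₜ v1 s) :
    liftedCoaction sigma ρV (c ⊗ₜ v) =
      ∑ p ∈ t, ∑ q ∈ u p, ∑ s ∈ w,
        (f2 p q ⊗ₜ v0 s) ⊗ₜ[k] (g2 p q ⊗ₜ[k] (v1 s ⊗ₜ[k] sigma (f p))) := by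
  simp only [liftedCoaction, LinearMap.coe_comp, LinearEquiv.coe_coe, Function.comp_apply,
    TensorProduct.map_tmul, hΔa, hρ]
  simp only [map_sum, hΔg, TensorProduct.sum_tmul, TensorProduct.tmul_sum,
    LinearMap.rTensor_tmul, LinearMap.lTensor_tmul, TensorProduct.comm_tmul,
    TensorProduct.assoc_tmul, TensorProduct.assoc_symm_tmul,
    TensorProduct.tensorTensorTensorComm_tmul, TensorProduct.map_tmul,
    LinearMap.coe_comp, LinearEquiv.coe_coe, Function.comp_apply]
  rw [Finset.sum_comm]
  exact Finset.sum_congr rfl fun p _ => Finset.sum_comm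

set_option maxRecDepth 8000 in
set_option synthInstance.maxHeartbeats 1000000 in
set_option maxHeartbeats 1000000 in
/-- Evaluation of `ydRHS` on a pure tensor, in terms of chosen representations
of the iterated comultiplication and the coaction. -/
lemma ydRHS_apply_repr {H : Type} [Ring H] [Bialgebra k H]
    {M E : Type} [AddCommGroup M] [Module k M] [AddCommGroup E] [Module k E]
    (μ : H ⊗[k] M →ₗ[k] M) (aL : H ⊗[k] E →ₗ[k] E) (aR : E ⊗[k] H →ₗ[k] E)
    (Sinv : H →ₗ[k] H) (ρ : M →ₗ[k] M ⊗[k] E)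
    {ι : Type*} {ι' : ι → Type*} {ιm : Type*}
    (t : Finset ι) (u : ∀ i, Finset (ι' i)) (w : Finset ιm)
    (X1 Y : ι → H) (X2 X3 : ∀ i, ι' i → H) (m0 : ιm → M) (m1 : ιm → E)
    (x : H) (m : M)
    (hΔx : comul (R := k) x = ∑ i ∈ t, X1 i ⊗ₜ Y i)
    (hΔY : ∀ i, comul (R := k) (Y i) = ∑ j ∈ u i, X2 i j ⊗ₜ X3 i j)
    (hρ : ρ m = ∑ s ∈ w, m0 s ⊗ₜ m1 s) :
    ydRHS μ aL aR Sinv ρ (x ⊗ₜ m) =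
      ∑ i ∈ t, ∑ j ∈ u i, ∑ s ∈ w,
        μ (X2 i j ⊗ₜ m0 s) ⊗ₜ[k] aL (X3 i j ⊗ₜ aR (m1 s ⊗ₜ Sinv (X1 i))) := by
  simp only [ydRHS, LinearMap.coe_comp, LinearEquiv.coe_coe, Function.comp_apply,
    TensorProduct.map_tmul, hΔx, hρ]
  simp only [map_sum, hΔY, TensorProduct.sum_tmul, TensorProduct.tmul_sum,
    LinearMap.rTensor_tmul, LinearMap.lTensor_tmul, TensorProduct.comm_tmul,
    TensorProduct.assoc_tmul, TensorProduct.assoc_symm_tmul,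
    TensorProduct.tensorTensorTensorComm_tmul, TensorProduct.map_tmul,
    LinearMap.coe_comp, LinearEquiv.coe_coe, Function.comp_apply]
  rw [Finset.sum_comm]
  exact Finset.sum_congr rfl fun p _ => Finset.sum_comm

/-- Let `H, K` be Hopf algebras with bijective antipodes, `C` a `(K,H)`-bi-Galois
co-object with canonical coalgebra map `σ̄ : C → C̄`, and `D` an `(H,H)`-bimodule
coalgebra.  For a generalized Yetter-Drinfeld module `V ∈ _H YD^D(H,H)`, the left
`K`-module `C ⊗_H V` with the coaction
`ρ(c ⊗_H v) = (c₍₂₎ ⊗_H v₍₀₎) ⊗ (c₍₃₎ ⊗_H v₍₁₎ ⊗_H σ̄(c₍₁₎))`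
satisfies the Yetter-Drinfeld compatibility condition over the datum
`(K,K,K, C ⊗_H D ⊗_H C̄)`, i.e. `C ⊗_H V` is a generalized YD module over `K`.
All balanced tensor products are realized as quotients (`S_V`, `S_E`) and both
sides of the condition are compared after projecting to these quotients. -/
theorem biGaloisCoobject_lift_YD
    {H : Type} [Ring H] [HopfAlgebra k H]
    {K : Type} [Ring K] [HopfAlgebra k K]
    {C : Type} [AddCommGroup C] [Module k C] [Coalgebra k C]
    {D : Type} [AddCommGroup D] [Module k D] [Coalgebra k D]
    {V : Type} [AddCommGroup V] [Module k V]
    (actL : K ⊗[k] C →ₗ[k] C) (actR : C ⊗[k] H →ₗ[k] C)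
    (aLD : H ⊗[k] D →ₗ[k] D) (aRD : D ⊗[k] H →ₗ[k] D)
    (aV : H ⊗[k] V →ₗ[k] V) (ρV : V →ₗ[k] V ⊗[k] D)
    (SinvH : H →ₗ[k] H) (SinvK : K →ₗ[k] K) (sigma : C →ₗ[k] C)
    (hSH1 : SinvH ∘ₗ HopfAlgebra.antipode (R := k) (A := H) = LinearMap.id)
    (hSH2 : HopfAlgebra.antipode (R := k) (A := H) ∘ₗ SinvH = LinearMap.id)
    (hSK1 : SinvK ∘ₗ HopfAlgebra.antipode (R := k) (A := K) = LinearMap.id)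
    (hSK2 : HopfAlgebra.antipode (R := k) (A := K) ∘ₗ SinvK = LinearMap.id)
    -- `C` is a `(K,H)`-bimodule coalgebra
    (hactLone : ∀ c : C, actL (1 ⊗ₜ c) = c)
    (hactLmul : ∀ (x y : K) (c : C), actL ((x * y) ⊗ₜ c) = actL (x ⊗ₜ actL (y ⊗ₜ c)))
    (hactRone : ∀ c : C, actR (c ⊗ₜ 1) = c)
    (hactRmul : ∀ (c : C) (g h : H), actR (c ⊗ₜ (g * h)) = actR (actR (c ⊗ₜ g) ⊗ₜ h))
    (hbimodC : ∀ (x : K) (c : C) (h : H), actL (x ⊗ₜ actR (c ⊗ₜ h)) = actR (actL (x ⊗ₜ c) ⊗ₜ h))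
    (hmeasL : ∀ (x : K) (c : C), comul (R := k) (actL (x ⊗ₜ c))
        = (TensorProduct.map actL actL) ((TensorProduct.tensorTensorTensorComm k K K C C).toLinearMap
            (comul (R := k) x ⊗ₜ comul (R := k) c)))
    (hmeasR : ∀ (c : C) (h : H), comul (R := k) (actR (c ⊗ₜ h))
        = (TensorProduct.map actR actR) ((TensorProduct.tensorTensorTensorComm k C C H H).toLinearMap
            (comul (R := k) c ⊗ₜ comul (R := k) h)))
    -- `D` is an `(H,H)`-bimodule coalgebra
    (haLDone : ∀ d : D, aLD (1 ⊗ₜ d) = d)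
    (haLDmul : ∀ (g h : H) (d : D), aLD ((g * h) ⊗ₜ d) = aLD (g ⊗ₜ aLD (h ⊗ₜ d)))
    (haRDone : ∀ d : D, aRD (d ⊗ₜ 1) = d)
    (haRDmul : ∀ (d : D) (g h : H), aRD (d ⊗ₜ (g * h)) = aRD (aRD (d ⊗ₜ g) ⊗ₜ h))
    (hbimodD : ∀ (g : H) (d : D) (h : H), aLD (g ⊗ₜ aRD (d ⊗ₜ h)) = aRD (aLD (g ⊗ₜ d) ⊗ₜ h))
    -- `σ̄` is a coalgebra map `C → C̄` intertwining the actions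
    (hσcoalg : comul (R := k) (A := C) ∘ₗ sigma
        = (TensorProduct.comm k C C).toLinearMap ∘ₗ (TensorProduct.map sigma sigma) ∘ₗ
          comul (R := k) (A := C))
    (hσcounit : counit (R := k) (A := C) ∘ₗ sigma = counit (R := k) (A := C))
    (hσact : ∀ (x : K) (c : C) (h : H),
        sigma (actL (x ⊗ₜ actR (c ⊗ₜ h)))
          = actL (SinvK (SinvK x) ⊗ₜ actR (sigma c ⊗ₜ SinvH (SinvH h))))
    -- `V` is a left `H`-module and a right `D`-comodule
    (haVone : ∀ v : V, aV (1 ⊗ₜ v) = v)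
    (haVmul : ∀ (g h : H) (v : V), aV ((g * h) ⊗ₜ v) = aV (g ⊗ₜ aV (h ⊗ₜ v)))
    (hρVcoassoc : (TensorProduct.assoc k V D D).toLinearMap ∘ₗ
        (LinearMap.rTensor D ρV) ∘ₗ ρV = (LinearMap.lTensor V (comul (R := k) (A := D))) ∘ₗ ρV)
    (hρVcounit : (TensorProduct.rid k V).toLinearMap ∘ₗ
        (LinearMap.lTensor V (counit (R := k) (A := D))) ∘ₗ ρV = LinearMap.id)
    -- `V ∈ _H YD^D(H,H)`
    (hYDV : ρV ∘ₗ aV = ydRHS aV aLD aRD SinvH ρV)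
    -- balancing submodules presenting `C ⊗_H V` and `E = C ⊗_H D ⊗_H C̄`
    (SV : Submodule k (C ⊗[k] V))
    (hSV : SV = Submodule.span k {x | ∃ (c : C) (h : H) (v : V),
        x = actR (c ⊗ₜ h) ⊗ₜ v - c ⊗ₜ aV (h ⊗ₜ v)})
    (SE : Submodule k (C ⊗[k] (D ⊗[k] C)))
    (hSE : SE = Submodule.span k
      ({x | ∃ (c : C) (h : H) (d : D) (c' : C),
          x = actR (c ⊗ₜ h) ⊗ₜ (d ⊗ₜ c') - c ⊗ₜ (aLD (h ⊗ₜ d) ⊗ₜ c')} ∪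
       {x | ∃ (c : C) (d : D) (h : H) (c' : C),
          x = c ⊗ₜ (aRD (d ⊗ₜ h) ⊗ₜ c') - c ⊗ₜ (d ⊗ₜ actR (c' ⊗ₜ SinvH h))})) :
    (TensorProduct.map SV.mkQ SE.mkQ) ∘ₗ (liftedCoaction sigma ρV) ∘ₗ
        ((LinearMap.rTensor V actL) ∘ₗ (TensorProduct.assoc k K C V).symm.toLinearMap)
      = (TensorProduct.map SV.mkQ SE.mkQ) ∘ₗ
        ydRHS
          -- the `K`-action on `C ⊗ V`
          ((LinearMap.rTensor V actL) ∘ₗ (TensorProduct.assoc k K C V).symm.toLinearMap)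
          -- the left `K`-action on `E = C ⊗ (D ⊗ C)` (through the first `C`-factor)
          ((LinearMap.rTensor (D ⊗[k] C) actL) ∘ₗ
            (TensorProduct.assoc k K C (D ⊗[k] C)).symm.toLinearMap)
          -- the right `K`-action on `E` (through the last factor `C̄`)
          ((LinearMap.lTensor C
              ((LinearMap.lTensor D
                  (actL ∘ₗ (TensorProduct.comm k C K).toLinearMap ∘ₗ
                    (LinearMap.lTensor C SinvK))) ∘ₗ
                (TensorProduct.assoc k D C K).toLinearMap)) ∘ₗ
            (TensorProduct.assoc k C (D ⊗[k] C) K).toLinearMap)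
          SinvK (liftedCoaction sigma ρV) := by
  -- `SinvH 1 = 1`
  have hSinvH_one : SinvH (1 : H) = 1 := by
    have h := LinearMap.congr_fun hSH1 (1 : H)
    simpa [aux_antipode_one] using h
  -- the key pointwise identity `σ(x ▷ c) = S⁻²(x) ▷ σ(c)`
  have key : ∀ (y : K) (cc : C),
      sigma (actL (y ⊗ₜ cc)) = actL (SinvK (SinvK y) ⊗ₜ sigma cc) := by
    intro y cc
    have h := hσact y cc 1
    rw [hactRone] at h
    rw [h, hSinvH_one, hSinvH_one, hactRone]
  -- It suffices to prove the equality before passing to the quotients.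
  suffices hmain : (liftedCoaction sigma ρV) ∘ₗ
      ((LinearMap.rTensor V actL) ∘ₗ (TensorProduct.assoc k K C V).symm.toLinearMap)
      = ydRHS
          ((LinearMap.rTensor V actL) ∘ₗ (TensorProduct.assoc k K C V).symm.toLinearMap)
          ((LinearMap.rTensor (D ⊗[k] C) actL) ∘ₗ
            (TensorProduct.assoc k K C (D ⊗[k] C)).symm.toLinearMap)
          ((LinearMap.lTensor C
              ((LinearMap.lTensor D
                  (actL ∘ₗ (TensorProduct.comm k C K).toLinearMap ∘ₗ
                    (LinearMap.lTensor C SinvK))) ∘ₗ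
                (TensorProduct.assoc k D C K).toLinearMap)) ∘ₗ
            (TensorProduct.assoc k C (D ⊗[k] C) K).toLinearMap)
          SinvK (liftedCoaction sigma ρV) by
    rw [hmain]
  apply TensorProduct.ext'
  intro x m
  induction m using TensorProduct.induction_on with
  | zero => simp
  | add m₁ m₂ h₁ h₂ =>
      simp only [TensorProduct.tmul_add, map_add] at h₁ h₂ ⊢
      rw [h₁, h₂]
  | tmul c v =>
    -- representations of the iterated comultiplications
    obtain ⟨sv, hsv⟩ := TensorProduct.exists_finset (R := k) (ρV v)
    set rx := ℛ k x with hrxdef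
    set rc := ℛ k c with hrcdef
    let rxi : ∀ i, Coalgebra.Repr k (rx.right i) (K × K) := fun i => ℛ k (rx.right i)
    let rci : ∀ p, Coalgebra.Repr k (rc.right p) (C × C) := fun p => ℛ k (rc.right p)
    -- comultiplication of `x ▷ c`
    have h1 : comul (R := k) (actL (x ⊗ₜ c))
        = ∑ ip ∈ rx.index ×ˢ rc.index,
            actL (rx.left ip.1 ⊗ₜ rc.left ip.2) ⊗ₜ[k]
              actL (rx.right ip.1 ⊗ₜ rc.right ip.2) := by
      rw [hmeasL x c, ← rx.eq, ← rc.eq, Finset.sum_product]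
      simp only [map_sum, TensorProduct.sum_tmul, TensorProduct.tmul_sum,
        TensorProduct.tensorTensorTensorComm_tmul, TensorProduct.map_tmul,
        LinearEquiv.coe_coe]
      exact Finset.sum_comm
    have h2 : ∀ ip : (K × K) × (C × C),
        comul (R := k) (actL (rx.right ip.1 ⊗ₜ rc.right ip.2))
          = ∑ jq ∈ (rxi ip.1).index ×ˢ (rci ip.2).index,
              actL ((rxi ip.1).left jq.1 ⊗ₜ (rci ip.2).left jq.2) ⊗ₜ[k]
                actL ((rxi ip.1).right jq.1 ⊗ₜ (rci ip.2).right jq.2) := by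
      intro ip
      rw [hmeasL, ← (rxi ip.1).eq, ← (rci ip.2).eq, Finset.sum_product]
      simp only [map_sum, TensorProduct.sum_tmul, TensorProduct.tmul_sum,
        TensorProduct.tensorTensorTensorComm_tmul, TensorProduct.map_tmul,
        LinearEquiv.coe_coe]
      exact Finset.sum_comm
    -- evaluation of the lifted coaction on `(x ▷ c) ⊗ v`
    have hLHSval := liftedCoaction_apply_repr sigma ρV
        (rx.index ×ˢ rc.index)
        (fun ip => (rxi ip.1).index ×ˢ (rci ip.2).index) sv
        (fun ip => actL (rx.left ip.1 ⊗ₜ rc.left ip.2))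
        (fun ip => actL (rx.right ip.1 ⊗ₜ rc.right ip.2))
        (fun ip jq => actL ((rxi ip.1).left jq.1 ⊗ₜ (rci ip.2).left jq.2))
        (fun ip jq => actL ((rxi ip.1).right jq.1 ⊗ₜ (rci ip.2).right jq.2))
        (fun s => s.1) (fun s => s.2)
        (actL (x ⊗ₜ c)) v h1 h2 hsv
    -- evaluation of the lifted coaction on `c ⊗ v`
    have hmid := liftedCoaction_apply_repr sigma ρV
        rc.index (fun p => (rci p).index) sv
        rc.left rc.right
        (fun p q => (rci p).left q) (fun p q => (rci p).right q)
        (fun s => s.1) (fun s => s.2)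
        c v rc.eq.symm (fun p => (rci p).eq.symm) hsv
    -- flatten it into a single sum
    have hflat : liftedCoaction sigma ρV (c ⊗ₜ v)
        = ∑ σx ∈ rc.index.sigma (fun p => (rci p).index ×ˢ sv),
            (((rci σx.1).left σx.2.1 ⊗ₜ σx.2.2.1) :  C ⊗[k] V) ⊗ₜ[k]
              (((rci σx.1).right σx.2.1 ⊗ₜ (σx.2.2.2 ⊗ₜ sigma (rc.left σx.1))) :
                C ⊗[k] (D ⊗[k] C)) := by
      rw [hmid, Finset.sum_sigma]
      exact Finset.sum_congr rfl fun p _ => by rw [Finset.sum_product]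
    -- evaluation of the right-hand side
    have hRHSval := ydRHS_apply_repr
        ((LinearMap.rTensor V actL) ∘ₗ (TensorProduct.assoc k K C V).symm.toLinearMap)
        ((LinearMap.rTensor (D ⊗[k] C) actL) ∘ₗ
          (TensorProduct.assoc k K C (D ⊗[k] C)).symm.toLinearMap)
        ((LinearMap.lTensor C
            ((LinearMap.lTensor D
                (actL ∘ₗ (TensorProduct.comm k C K).toLinearMap ∘ₗ
                  (LinearMap.lTensor C SinvK))) ∘ₗ
              (TensorProduct.assoc k D C K).toLinearMap)) ∘ₗ
          (TensorProduct.assoc k C (D ⊗[k] C) K).toLinearMap)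
        SinvK (liftedCoaction sigma ρV)
        rx.index (fun i => (rxi i).index)
        (rc.index.sigma (fun p => (rci p).index ×ˢ sv))
        rx.left rx.right
        (fun i j => (rxi i).left j) (fun i j => (rxi i).right j)
        (fun σx => (rci σx.1).left σx.2.1 ⊗ₜ σx.2.2.1)
        (fun σx => (rci σx.1).right σx.2.1 ⊗ₜ (σx.2.2.2 ⊗ₜ sigma (rc.left σx.1)))
        x (c ⊗ₜ v) rx.eq.symm (fun i => (rxi i).eq.symm) hflat
    -- put everything together
    simp only [LinearMap.coe_comp, LinearEquiv.coe_coe, Function.comp_apply,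
      TensorProduct.assoc_symm_tmul, LinearMap.rTensor_tmul]
    rw [hLHSval, hRHSval]
    simp only [LinearMap.coe_comp, LinearEquiv.coe_coe, Function.comp_apply,
      TensorProduct.assoc_symm_tmul, TensorProduct.assoc_tmul, LinearMap.rTensor_tmul,
      LinearMap.lTensor_tmul, TensorProduct.comm_tmul, Finset.sum_sigma, Finset.sum_product]
    apply Finset.sum_congr rfl; intro i _
    rw [Finset.sum_comm]
    apply Finset.sum_congr rfl; intro j _
    apply Finset.sum_congr rfl; intro p _
    apply Finset.sum_congr rfl; intro q _
    apply Finset.sum_congr rfl; intro s _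
    rw [key]
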